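/- arXiv:2403.07629 — 2 statements merged into one kernel-verified Lean document; each statement's English description precedes it below -/
import Mathlib

section
/- For each odd n ≥ 1, write δ = (n−1)/2. In RLT_n, the number of ordered pairs (γ₁, γ₂), where γ₁ is a 3-cycle through vertex 0, γ₂ is a 5-cycle through vertex 0, and V(γ₁) ⊆ V(γ₂), equals (δ−1)δ(δ+1)(9δ−10)/8. -/
/-- The dominance relation of the regular locally transitive tournament `RLT_n`
on `ZMod n` (for odd `n`). -/
def rltAdj (n : ℕ) (i j : ZMod n) : Prop :=
  (j - i).val ∈ Finset.Icc 1 ((n - 1) / 2)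

/-- An `m`-cycle through the vertex `0`, recorded as the injective cyclic sequence of
its vertices based at `0` (so each such cycle is recorded exactly once). -/
def IsBasedCycleAtZero (n m : ℕ) [NeZero m] (v : Fin m → ZMod n) : Prop :=
  v 0 = 0 ∧ Function.Injective v ∧ ∀ k, rltAdj n (v k) (v (k + 1))

/-
Write `n = 2d + 1` and represent the vertices by `0, …, 2d`. A 5-cycle through `0` winds once or
twice around `ℤ/n`. If it winds once, its vertices increase and all gaps between consecutive
ones are at most `d`; conversely, a 5-set containing a 3-cycle `{0, x, y}` through `0` has all
gaps at most `d`, since the gaps of `{0, x, y}` already are. So the pairs with a once-winding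
5-cycle are counted by `C(d+1, 2) · C(2d-2, 2)`: a 3-cycle, then two further vertices.
A twice-winding 5-cycle `0 → a → b → c → e → 0` has its vertices ordered `0 < c < a < e < b`,
contains exactly three 3-cycles through `0`, and corresponds to the 4-subset
`{e-d-1, c, b-d, a+1}` of `{0, …, d+1}`; these contribute `3 · C(d+2, 4)`. Likewise the 3-cycles
`0 → x → y → 0` correspond to the 2-subsets `{y-d-1, x}` of `{0, …, d}`.
-/

open Finset Function

theorem card_fin_orderEmbedding (k : ℕ) (α : Type*) [LinearOrder α] :
    Nat.card (Fin k ↪o α) = (Nat.card α).choose k := by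
  rw [Nat.card_congr Set.powersetCard.ofFinEmbEquiv, Set.powersetCard.card]

theorem card_fin_orderEmbedding_range_superset {k : ℕ} {α : Type*} [LinearOrder α] [Fintype α]
    (T : Finset α) (hT : #T ≤ k) :
    Nat.card {f : Fin k ↪o α // ↑T ⊆ Set.range f} =
      (Fintype.card α - #T).choose (k - #T) := by
  rw [← card_univ, ← card_filter_powersetCard_subset T univ k (subset_univ T) hT,
    ← Nat.card_eq_finsetCard]
  refine Nat.card_congr ((Set.powersetCard.ofFinEmbEquiv.subtypeEquiv fun f => ?_).trans
    ((Equiv.subtypeSubtypeEquivSubtypeInter _ (T ⊆ ·)).trans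
      (Equiv.subtypeEquivRight fun S => ?_)))
  · simp [Set.subset_def, subset_iff, Set.powersetCard.mem_coe_iff]
  · simp [Set.powersetCard.mem_iff]

namespace RLT

variable {d : ℕ}

theorem rltAdj_iff {x y : Fin (2 * d + 1)} :
    rltAdj (2 * d + 1) x y ↔ (x : ℕ) < y ∧ (y : ℕ) ≤ x + d ∨ (y : ℕ) + d < x := by
  change ((y - x : Fin (2 * d + 1)) : ℕ) ∈ Icc 1 ((2 * d + 1 - 1) / 2) ↔ _
  rw [Fin.val_sub, mem_Icc, show (2 * d + 1 - 1) / 2 = d by omega]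
  rcases le_or_gt (x : ℕ) y with h | h
  · rw [show 2 * d + 1 - x + y = (y - x) + (2 * d + 1) by omega, Nat.add_mod_right,
      Nat.mod_eq_of_lt (by omega)]
    omega
  · rw [Nat.mod_eq_of_lt (by omega)]
    omega

/-- `ZMod (2 * d + 1)` is `Fin (2 * d + 1)` by definition; stating cycles on `Fin` gives access
to its order. -/
def IsCycleAtZero (d m : ℕ) [NeZero m] (w : Fin m → Fin (2 * d + 1)) : Prop :=
  IsBasedCycleAtZero (2 * d + 1) m w

theorem isCycleAtZero_iff {m : ℕ} [NeZero m] {w : Fin m → Fin (2 * d + 1)} :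
    IsCycleAtZero d m w ↔ w 0 = 0 ∧ Injective w ∧ ∀ k,
      (w k : ℕ) < w (k + 1) ∧ (w (k + 1) : ℕ) ≤ w k + d ∨ (w (k + 1) : ℕ) + d < w k := by
  simp only [IsCycleAtZero, IsBasedCycleAtZero, ← rltAdj_iff]
  rfl

theorem isCycleAtZero_three_iff {v : Fin 3 → Fin (2 * d + 1)} :
    IsCycleAtZero d 3 v ↔
      v 0 = 0 ∧ (v 1 : ℕ) ≤ d ∧ d < (v 2 : ℕ) ∧ (v 2 : ℕ) ≤ v 1 + d := by
  rw [isCycleAtZero_iff]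
  constructor
  · rintro ⟨h0, -, harc⟩
    have a0 := harc 0
    have a1 := harc 1
    have a2 := harc 2
    simp only [Fin.reduceAdd, h0, Fin.val_zero] at a0 a1 a2
    omega
  · rintro ⟨h0, h1, h2, h12⟩
    have h0' : (v 0 : ℕ) = 0 := Fin.val_eq_zero_iff.2 h0
    have hmono : StrictMono v := by
      rw [Fin.strictMono_iff_lt_succ]
      intro i
      fin_cases i <;>
        simp only [Fin.zero_eta, Fin.mk_one, Fin.castSucc_zero, Fin.succ_zero_eq_one,
          Fin.castSucc_one, Fin.succ_one_eq_two] <;> omega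
    refine ⟨h0, hmono.injective, fun k => ?_⟩
    fin_cases k <;>
      simp only [Fin.zero_eta, Fin.mk_one, Fin.reduceFinMk, Fin.reduceAdd] <;> omega

theorem isCycleAtZero_of_strictMono {m : ℕ} {w : Fin (m + 1) → Fin (2 * d + 1)}
    (hw : StrictMono w) {v : Fin 3 → Fin (2 * d + 1)} (hv : IsCycleAtZero d 3 v)
    (hvw : Set.range v ⊆ Set.range w) : IsCycleAtZero d (m + 1) w := by
  obtain ⟨hv0, hv1, hv2, hv12⟩ := isCycleAtZero_three_iff.1 hv
  obtain ⟨z, hz⟩ := hvw ⟨0, rfl⟩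
  obtain ⟨i, hi⟩ := hvw ⟨1, rfl⟩
  obtain ⟨j, hj⟩ := hvw ⟨2, rfl⟩
  have hw0 : w 0 = 0 :=
    le_antisymm ((hw.monotone (Fin.zero_le z)).trans_eq (hz.trans hv0)) (Fin.zero_le _)
  refine isCycleAtZero_iff.2 ⟨hw0, hw.injective, fun k => ?_⟩
  rcases Fin.eq_castSucc_or_eq_last k with ⟨k, rfl⟩ | rfl
  · -- the step from `w k` to the next vertex stays within one gap of the triangle `0, v 1, v 2`
    have hsep : ∀ l, w l ≤ w k.castSucc ∨ w k.succ ≤ w l := fun l =>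
      (le_or_gt l k.castSucc).imp hw.monotone.imp
        fun h => hw.monotone (Fin.castSucc_lt_iff_succ_le.1 h)
    have hi' := hsep i
    have hj' := hsep j
    have hlt := hw (Fin.castSucc_lt_succ (i := k))
    rw [hi] at hi'
    rw [hj] at hj'
    rw [Fin.coeSucc_eq_succ]
    omega
  · have hj' := hw.monotone (Fin.le_last j)
    rw [hj] at hj'
    rw [Fin.last_add_one, hw0, Fin.val_zero]
    omega

/-- A 5-cycle through `0` winding twice around `ℤ/(2d+1)`: its vertices are ordered
`0 < w 3 < w 1 < w 4 < w 2`. -/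
abbrev IsPentagram (w : Fin 5 → Fin (2 * d + 1)) : Prop :=
  w 0 = 0 ∧ 0 < (w 3 : ℕ) ∧ (w 4 : ℕ) ≤ w 3 + d ∧ (w 3 : ℕ) + d < w 2 ∧
    (w 2 : ℕ) ≤ w 1 + d ∧ (w 1 : ℕ) ≤ d ∧ d < (w 4 : ℕ)

theorem isCycleAtZero_five_and_not_strictMono_iff {w : Fin 5 → Fin (2 * d + 1)} :
    IsCycleAtZero d 5 w ∧ ¬StrictMono w ↔ IsPentagram w := by
  rw [isCycleAtZero_iff]
  constructor
  · rintro ⟨⟨h0, hinj, harc⟩, hmono⟩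
    have a0 := harc 0
    have a1 := harc 1
    have a2 := harc 2
    have a3 := harc 3
    have a4 := harc 4
    have n30 : w 3 ≠ w 0 := hinj.ne (by decide)
    simp only [Fin.reduceAdd, h0, Fin.val_zero] at a0 a1 a2 a3 a4 n30
    refine ⟨h0, ?_⟩
    by_contra hpent
    apply hmono
    have h0' : (w 0 : ℕ) = 0 := Fin.val_eq_zero_iff.2 h0
    rw [Fin.strictMono_iff_lt_succ]
    intro i
    fin_cases i <;>
      simp only [Fin.zero_eta, Fin.mk_one, Fin.reduceFinMk, Fin.castSucc_zero,
        Fin.succ_zero_eq_one, Fin.castSucc_one, Fin.succ_one_eq_two, Fin.reduceCastSucc,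
        Fin.reduceSucc] <;> omega
  · rintro ⟨h0, h3, h34, h23, h12, h1, h4⟩
    have h0' : (w 0 : ℕ) = 0 := Fin.val_eq_zero_iff.2 h0
    refine ⟨⟨h0, fun i j hij => ?_, fun k => ?_⟩, fun hmono => ?_⟩
    · have hij' := congrArg Fin.val hij
      fin_cases i <;> fin_cases j <;>
        simp only [Fin.zero_eta, Fin.mk_one, Fin.reduceFinMk, Fin.reduceEq] at hij' ⊢ <;> omega
    · fin_cases k <;>
        simp only [Fin.zero_eta, Fin.mk_one, Fin.reduceFinMk, Fin.reduceAdd] <;> omega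
    · have := hmono (show (2 : Fin 5) < 3 by decide)
      omega

theorem card_threeCycles_range_subset_of_isPentagram {w : Fin 5 → Fin (2 * d + 1)}
    (hw : IsPentagram w) :
    Nat.card {v : Fin 3 → Fin (2 * d + 1) // IsCycleAtZero d 3 v ∧ Set.range v ⊆ Set.range w} =
      3 := by
  obtain ⟨h0, h3, h34, h23, h12, h1, h4⟩ := hw
  have h0' : (w 0 : ℕ) = 0 := Fin.val_eq_zero_iff.2 h0
  have hrange : ∀ i j : Fin 5, Set.range ![0, w i, w j] ⊆ Set.range w := by
    rintro i j _ ⟨k, rfl⟩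
    fin_cases k
    exacts [⟨0, h0⟩, ⟨i, rfl⟩, ⟨j, rfl⟩]
  classical
  rw [Nat.card_eq_fintype_card, Fintype.card_subtype, card_eq_three]
  refine ⟨![0, w 1, w 2], ![0, w 1, w 4], ![0, w 3, w 4], ?_, ?_, ?_, ?_⟩
  · intro h; have := congrFun h 2; simp only [Matrix.cons_val] at this; omega
  · intro h; have := congrFun h 1; simp only [Matrix.cons_val] at this; omega
  · intro h; have := congrFun h 1; simp only [Matrix.cons_val] at this; omega
  ext v
  simp only [mem_filter, mem_univ, true_and, mem_insert, mem_singleton, isCycleAtZero_three_iff]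
  constructor
  · rintro ⟨⟨hv0, hv1, hv2, hv12⟩, hvw⟩
    have hv : v = ![0, v 1, v 2] := by
      ext k; fin_cases k <;> simp [hv0]
    obtain ⟨i, hi⟩ := hvw ⟨1, rfl⟩
    obtain ⟨j, hj⟩ := hvw ⟨2, rfl⟩
    have hv1' : v 1 = w 1 ∨ v 1 = w 3 := by
      fin_cases i <;> simp only [Fin.zero_eta, Fin.mk_one, Fin.reduceFinMk] at hi <;> omega
    have hv2' : v 2 = w 2 ∨ v 2 = w 4 := by
      fin_cases j <;> simp only [Fin.zero_eta, Fin.mk_one, Fin.reduceFinMk] at hj <;> omega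
    rcases hv1' with e1 | e1 <;> rcases hv2' with e2 | e2
    · exact Or.inl (by rw [hv, e1, e2])
    · exact Or.inr (Or.inl (by rw [hv, e1, e2]))
    · omega
    · exact Or.inr (Or.inr (by rw [hv, e1, e2]))
  · rintro (rfl | rfl | rfl) <;> refine ⟨⟨rfl, ?_, ?_, ?_⟩, hrange _ _⟩ <;>
      simp only [Matrix.cons_val] <;> omega

def threeCycleEquiv :
    {v : Fin 3 → Fin (2 * d + 1) // IsCycleAtZero d 3 v} ≃ (Fin 2 ↪o Fin (d + 1)) where
  toFun v :=
    have hv := isCycleAtZero_three_iff.1 v.2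
    OrderEmbedding.ofStrictMono ![⟨v.1 2 - d - 1, by omega⟩, ⟨v.1 1, by omega⟩] <| by
      rw [Fin.strictMono_iff_lt_succ]
      intro i
      fin_cases i
      simp only [Fin.zero_eta, Fin.castSucc_zero, Fin.succ_zero_eq_one, Matrix.cons_val,
        Fin.mk_lt_mk]
      omega
  invFun f :=
    have hf := f.strictMono (show (0 : Fin 2) < 1 by decide)
    ⟨![0, ⟨f 1, by omega⟩, ⟨f 0 + d + 1, by omega⟩], isCycleAtZero_three_iff.2 <| by
      simp only [Matrix.cons_val, true_and]
      omega⟩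
  left_inv v := by
    have hv := isCycleAtZero_three_iff.1 v.2
    ext k
    fin_cases k <;> simp only [Fin.zero_eta, Fin.mk_one, Fin.reduceFinMk, Matrix.cons_val,
      OrderEmbedding.coe_ofStrictMono, hv.1]
    omega
  right_inv f := by
    have hf := f.strictMono (show (0 : Fin 2) < 1 by decide)
    ext k
    fin_cases k <;> simp only [Fin.zero_eta, Fin.mk_one, Matrix.cons_val,
      OrderEmbedding.coe_ofStrictMono]
    omega

def pentagramEquiv :
    {w : Fin 5 → Fin (2 * d + 1) // IsPentagram w} ≃ (Fin 4 ↪o Fin (d + 2)) where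
  toFun w :=
    have hw := w.2
    OrderEmbedding.ofStrictMono
      ![⟨w.1 4 - d - 1, by omega⟩, ⟨w.1 3, by omega⟩, ⟨w.1 2 - d, by omega⟩,
        ⟨w.1 1 + 1, by omega⟩] <| by
        rw [Fin.strictMono_iff_lt_succ]
        intro i
        fin_cases i <;>
          simp only [Fin.zero_eta, Fin.mk_one, Fin.reduceFinMk, Fin.castSucc_zero,
            Fin.succ_zero_eq_one, Fin.castSucc_one, Fin.succ_one_eq_two, Fin.reduceCastSucc,
            Fin.reduceSucc, Matrix.cons_val, Fin.mk_lt_mk] <;> omega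
  invFun f :=
    have h01 := f.strictMono (show (0 : Fin 4) < 1 by decide)
    have h12 := f.strictMono (show (1 : Fin 4) < 2 by decide)
    have h23 := f.strictMono (show (2 : Fin 4) < 3 by decide)
    ⟨![0, ⟨f 3 - 1, by omega⟩, ⟨f 2 + d, by omega⟩, ⟨f 1, by omega⟩, ⟨f 0 + d + 1, by omega⟩],
      by simp only [IsPentagram, Matrix.cons_val, true_and]; omega⟩
  left_inv := by
    rintro ⟨w, h0, h3, h34, h23, h12, h1, h4⟩
    ext k
    fin_cases k <;> simp only [Fin.zero_eta, Fin.mk_one, Fin.reduceFinMk, Matrix.cons_val,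
      OrderEmbedding.coe_ofStrictMono, h0] <;> omega
  right_inv f := by
    have h01 := f.strictMono (show (0 : Fin 4) < 1 by decide)
    have h12 := f.strictMono (show (1 : Fin 4) < 2 by decide)
    have h23 := f.strictMono (show (2 : Fin 4) < 3 by decide)
    ext k
    fin_cases k <;> simp only [Fin.zero_eta, Fin.mk_one, Fin.reduceFinMk, Matrix.cons_val,
      OrderEmbedding.coe_ofStrictMono] <;> omega

abbrev NestedPairs (d : ℕ) : Type :=
  {p : (Fin 3 → Fin (2 * d + 1)) × (Fin 5 → Fin (2 * d + 1)) //
    IsCycleAtZero d 3 p.1 ∧ IsCycleAtZero d 5 p.2 ∧ Set.range p.1 ⊆ Set.range p.2}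

def nestedPairsStrictMonoEquiv :
    {p : NestedPairs d // StrictMono p.1.2} ≃
      Σ v : {v : Fin 3 → Fin (2 * d + 1) // IsCycleAtZero d 3 v},
        {f : Fin 5 ↪o Fin (2 * d + 1) // Set.range v.1 ⊆ Set.range f} where
  toFun p := ⟨⟨p.1.1.1, p.1.2.1⟩, ⟨OrderEmbedding.ofStrictMono p.1.1.2 p.2, p.1.2.2.2⟩⟩
  invFun q := ⟨⟨(q.1.1, q.2.1), q.1.2,
    isCycleAtZero_of_strictMono q.2.1.strictMono q.1.2 q.2.2, q.2.2⟩, q.2.1.strictMono⟩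
  left_inv _ := rfl
  right_inv _ := rfl

def nestedPairsNotStrictMonoEquiv :
    {p : NestedPairs d // ¬StrictMono p.1.2} ≃
      Σ w : {w : Fin 5 → Fin (2 * d + 1) // IsPentagram w},
        {v : Fin 3 → Fin (2 * d + 1) //
          IsCycleAtZero d 3 v ∧ Set.range v ⊆ Set.range w.1} where
  toFun p := ⟨⟨p.1.1.2, isCycleAtZero_five_and_not_strictMono_iff.1 ⟨p.1.2.2.1, p.2⟩⟩,
    ⟨p.1.1.1, p.1.2.1, p.1.2.2.2⟩⟩
  invFun q :=
    have hw := isCycleAtZero_five_and_not_strictMono_iff.2 q.1.2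
    ⟨⟨(q.2.1, q.1.1), q.2.2.1, hw.1, q.2.2.2⟩, hw.2⟩
  left_inv _ := rfl
  right_inv _ := rfl

theorem card_threeCycles :
    Nat.card {v : Fin 3 → Fin (2 * d + 1) // IsCycleAtZero d 3 v} = (d + 1).choose 2 := by
  rw [Nat.card_congr threeCycleEquiv, card_fin_orderEmbedding, Nat.card_fin]

theorem card_nestedPairs_strictMono :
    Nat.card {p : NestedPairs d // StrictMono p.1.2} =
      (d + 1).choose 2 * (2 * d - 2).choose 2 := by
  classical
  have hfiber (v : {v : Fin 3 → Fin (2 * d + 1) // IsCycleAtZero d 3 v}) :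
      Nat.card {f : Fin 5 ↪o Fin (2 * d + 1) // Set.range v.1 ⊆ Set.range f} =
        (2 * d - 2).choose 2 := by
    have hcard : #(univ.image v.1) = 3 := by
      rw [card_image_of_injective _ (isCycleAtZero_iff.1 v.2).2.1, card_univ, Fintype.card_fin]
    have := card_fin_orderEmbedding_range_superset (k := 5) (univ.image v.1) (by omega)
    rwa [coe_image, coe_univ, Set.image_univ, hcard, Fintype.card_fin,
      show 2 * d + 1 - 3 = 2 * d - 2 by omega] at this
  rw [Nat.card_congr nestedPairsStrictMonoEquiv, Nat.card_sigma,
    sum_congr rfl fun v _ => hfiber v, sum_const, card_univ, smul_eq_mul,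
    ← Nat.card_eq_fintype_card, card_threeCycles]

theorem card_nestedPairs_not_strictMono :
    Nat.card {p : NestedPairs d // ¬StrictMono p.1.2} = 3 * (d + 2).choose 4 := by
  rw [Nat.card_congr nestedPairsNotStrictMonoEquiv, Nat.card_sigma,
    sum_congr rfl fun w _ => card_threeCycles_range_subset_of_isPentagram w.2, sum_const,
    card_univ, smul_eq_mul, ← Nat.card_eq_fintype_card, Nat.card_congr pentagramEquiv,
    card_fin_orderEmbedding, Nat.card_fin, mul_comm]

theorem card_nestedPairs :
    Nat.card (NestedPairs d) =
      (d + 1).choose 2 * (2 * d - 2).choose 2 + 3 * (d + 2).choose 4 := by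
  rw [← card_nestedPairs_strictMono, ← card_nestedPairs_not_strictMono, ← Nat.card_sum]
  exact Nat.card_congr (Equiv.sumCompl _).symm

theorem eight_mul_card_nestedPairs (d : ℕ) :
    8 * (Nat.card (NestedPairs d) : ℤ) = ((d : ℤ) - 1) * d * (d + 1) * (9 * d - 10) := by
  rw [card_nestedPairs]
  obtain _ | _ | d := d
  · rfl
  · rfl
  have h2 := Nat.descFactorial_eq_factorial_mul_choose (d + 3) 2
  have h2' := Nat.descFactorial_eq_factorial_mul_choose (2 * d + 2) 2
  have h4 := Nat.descFactorial_eq_factorial_mul_choose (d + 4) 4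
  simp only [Nat.descFactorial_succ, Nat.descFactorial_zero, Nat.factorial, Nat.add_one_sub_one,
    Nat.reduceSubDiff, Nat.sub_zero, mul_one] at h2 h2' h4
  rw [show 2 * (d + 1 + 1) - 2 = 2 * d + 2 by omega]
  zify at h2 h2' h4
  push_cast
  linear_combination
    (-4 * ((2 * d + 2).choose 2 : ℤ)) * h2 - 2 * ((d + 2) * (d + 3) : ℤ) * h2' - h4

end RLT

theorem pairs_three_five_cycles_nested_of_RLT_general
    (n : ℕ) (hodd : Odd n) (δ : ℕ) (hδ : δ = (n - 1) / 2) :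
    8 * (Nat.card {p : (Fin 3 → ZMod n) × (Fin 5 → ZMod n) //
        IsBasedCycleAtZero n 3 p.1 ∧ IsBasedCycleAtZero n 5 p.2 ∧
        Set.range p.1 ⊆ Set.range p.2} : ℤ)
      = ((δ : ℤ) - 1) * (δ : ℤ) * ((δ : ℤ) + 1) * (9 * (δ : ℤ) - 10) := by
  obtain ⟨d, rfl⟩ := hodd
  obtain rfl : δ = d := by omega
  exact RLT.eight_mul_card_nestedPairs _

theorem pairs_three_five_cycles_nested_of_RLT
    (n : ℕ) (hodd : Odd n) (hn : 1 ≤ n) (δ : ℕ) (hδ : δ = (n - 1) / 2) :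
    8 * (Nat.card {p : (Fin 3 → ZMod n) × (Fin 5 → ZMod n) //
        IsBasedCycleAtZero n 3 p.1 ∧ IsBasedCycleAtZero n 5 p.2 ∧
        Set.range p.1 ⊆ Set.range p.2} : ℤ)
      = ((δ : ℤ) - 1) * (δ : ℤ) * ((δ : ℤ) + 1) * (9 * (δ : ℤ) - 10) :=
  pairs_three_five_cycles_nested_of_RLT_general n hodd δ hδ
end

section
/- For each odd n ≥ 1, write δ = (n−1)/2 and let N⁺(0) be the out-set of vertex 0 in RLT_n. The number of ordered pairs (γ₁, γ₂) of 4-cycles through vertex 0 such that γ₁ and γ₂ have a common vertex lying in N⁺(0) (i.e., V(γ₁)∩N⁺(0)∩V(γ₂) ≠ ∅) equals (δ−1)δ(δ+1)(13δ²−7δ−10)/12. -/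
open Finset

theorem two_mul_sum_Ioc {m k : ℕ} (h : m ≤ k) :
    2 * ∑ i ∈ Ioc m k, (i : ℤ) = (k + m + 1) * (k - m) := by
  induction k, h using Nat.le_induction with
  | base => simp
  | succ k hmk ih =>
    rw [sum_Ioc_succ_top hmk]
    push_cast
    linear_combination ih

theorem six_mul_sum_Icc_sq_affine (m : ℕ) (c d : ℤ) :
    6 * ∑ x ∈ Icc 1 m, (c + d * x) ^ 2 =
      (m : ℤ) * (6 * c ^ 2 + 6 * c * d * (m + 1) + d ^ 2 * (m + 1) * (2 * m + 1)) := by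
  induction m with
  | zero => simp
  | succ m ih =>
    rw [sum_Icc_succ_top (Nat.le_add_left 1 m)]
    push_cast
    linear_combination ih

theorem twelve_mul_sum_Icc_sub_one_mul_sq (m : ℕ) :
    12 * ∑ y ∈ Icc 1 m, ((y : ℤ) - 1) * y ^ 2 = ((m : ℤ) - 1) * m * (m + 1) * (3 * m + 2) := by
  induction m with
  | zero => simp
  | succ m ih =>
    rw [sum_Icc_succ_top (Nat.le_add_left 1 m)]
    push_cast
    linear_combination ih

section DoubleCounting
variable {ι α : Type*} [DecidableEq α]

theorem sum_sq_card_filter_mem {s : Finset ι} {U : Finset α} {A : ι → Finset α}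
    (hA : ∀ i ∈ s, A i ⊆ U) :
    ∑ x ∈ U, #{i ∈ s | x ∈ A i} ^ 2 = ∑ p ∈ s ×ˢ s, #(A p.1 ∩ A p.2) := by
  convert sum_card_bipartiteAbove_eq_sum_card_bipartiteBelow (s := U) (t := s ×ˢ s)
    (r := fun x p => x ∈ A p.1 ∧ x ∈ A p.2) using 2 with x _ p hp
  · rw [sq, ← card_product, bipartiteAbove]
    congr 1
    ext
    simp [and_and_and_comm]
  · rw [mem_product] at hp
    congr 1
    ext x
    simpa [bipartiteBelow] using fun hx _ => hA _ hp.1 hx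

theorem card_inter_of_card_le_two {s t : Finset α} (hs : #s ≤ 2) (ht : #t ≤ 2) :
    #(s ∩ t) = (if (s ∩ t).Nonempty then 1 else 0) + if s = t ∧ #s = 2 then 1 else 0 := by
  have hst : #(s ∩ t) ≤ 2 := (card_le_card inter_subset_left).trans hs
  interval_cases h : #(s ∩ t)
  · have : ¬ (s = t ∧ #s = 2) := by rintro ⟨rfl, h2⟩; simp_all
    rw [if_neg (by simpa [← card_pos] using h), if_neg this]
  · have : ¬ (s = t ∧ #s = 2) := by rintro ⟨rfl, h2⟩; simp_all
    rw [if_pos (by simp [← card_pos, h]), if_neg this]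
  · have hs' := eq_of_subset_of_card_le inter_subset_left (h ▸ hs)
    have ht' := eq_of_subset_of_card_le inter_subset_right (h ▸ ht)
    rw [if_pos (by simp [← card_pos, h]), if_pos ⟨hs'.symm.trans ht', hs' ▸ h⟩]
end DoubleCounting

theorem ZMod.val_sub_of_lt {n : ℕ} [NeZero n] {a b : ZMod n} (h : a.val < b.val) :
    (a - b).val = n - (b.val - a.val) := by
  have : NeZero (b - a) := ⟨fun hba => by rw [sub_eq_zero.1 hba] at h; exact h.false⟩
  rw [← neg_sub, ZMod.val_neg_of_ne_zero, ZMod.val_sub h.le]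

theorem rltAdj_iff_val {n : ℕ} [NeZero n] {x y : ZMod n} :
    rltAdj n x y ↔
      x.val < y.val ∧ y.val ≤ x.val + (n - 1) / 2 ∨ y.val + n ≤ x.val + (n - 1) / 2 := by
  have := x.val_lt
  rw [rltAdj, mem_Icc]
  rcases le_or_gt x.val y.val with h | h
  · rw [ZMod.val_sub h]
    omega
  · rw [ZMod.val_sub_of_lt h]
    omega

namespace RLT

def fourCycleTriples (δ : ℕ) : Finset (ℕ × ℕ × ℕ) :=
  {t ∈ range (2 * δ + 1) ×ˢ range (2 * δ + 1) ×ˢ range (2 * δ + 1) |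
    0 < t.1 ∧ t.1 ≤ δ ∧ t.1 < t.2.1 ∧ t.2.1 ≤ t.1 + δ ∧ t.2.1 < t.2.2 ∧ t.2.2 ≤ t.2.1 + δ ∧
      δ < t.2.2}

variable {δ a b c : ℕ}

theorem mem_fourCycleTriples : (a, b, c) ∈ fourCycleTriples δ ↔
    0 < a ∧ a ≤ δ ∧ a < b ∧ b ≤ a + δ ∧ b < c ∧ c ≤ b + δ ∧ δ < c ∧ c ≤ 2 * δ := by
  simp only [fourCycleTriples, mem_filter, mem_product, mem_range]
  omega

def valTriple {n : ℕ} (v : Fin 4 → ZMod n) : ℕ × ℕ × ℕ := ((v 1).val, (v 2).val, (v 3).val)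

def ofTriple (n : ℕ) (t : ℕ × ℕ × ℕ) : Fin 4 → ZMod n := ![0, t.1, t.2.1, t.2.2]

variable {n : ℕ} {v : Fin 4 → ZMod n}

theorem isBasedCycleAtZero_iff (hn : n = 2 * δ + 1) :
    IsBasedCycleAtZero n 4 v ↔ v 0 = 0 ∧ valTriple v ∈ fourCycleTriples δ := by
  have : NeZero n := ⟨by omega⟩
  have hδ : (n - 1) / 2 = δ := by omega
  have hlt := fun i => (v i).val_lt
  constructor
  · -- the arc conditions alone already force `0 < a < b < c`, hence injectivity
    rintro ⟨h0, -, harc⟩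
    have h1 : rltAdj n (v 0) (v 1) := harc 0
    have h2 : rltAdj n (v 1) (v 2) := harc 1
    have h3 : rltAdj n (v 2) (v 3) := harc 2
    have h4 : rltAdj n (v 3) (v 0) := harc 3
    simp only [rltAdj_iff_val, hδ, h0, ZMod.val_zero] at h1 h2 h3 h4
    refine ⟨h0, ?_⟩
    rw [valTriple, mem_fourCycleTriples]
    have := hlt 2
    have := hlt 3
    omega
  · rintro ⟨h0, hT⟩
    rw [valTriple, mem_fourCycleTriples] at hT
    have hv0 : (v 0).val = 0 := by rw [h0, ZMod.val_zero]
    have hmono : StrictMono fun i => (v i).val :=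
      Fin.strictMono_iff_lt_succ.2 fun i => by fin_cases i <;> dsimp <;> omega
    refine ⟨h0, hmono.injective.of_comp, fun k => ?_⟩
    fin_cases k <;> simp [rltAdj_iff_val, hδ] <;> omega

theorem ofTriple_valTriple [NeZero n] (h0 : v 0 = 0) : ofTriple n (valTriple v) = v := by
  funext i
  fin_cases i <;> simp [ofTriple, valTriple, h0]

theorem valTriple_ofTriple (hn : n = 2 * δ + 1) {t : ℕ × ℕ × ℕ} (ht : t ∈ fourCycleTriples δ) :
    valTriple (ofTriple n t) = t := by
  obtain ⟨a, b, c⟩ := t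
  rw [mem_fourCycleTriples] at ht
  simp [valTriple, ofTriple, Nat.mod_eq_of_lt, show a < n by omega, show b < n by omega,
    show c < n by omega]

def outNbrs (δ : ℕ) (t : ℕ × ℕ × ℕ) : Finset ℕ := {x ∈ {t.1, t.2.1} | x ≤ δ}

theorem outNbrs_subset_Icc {t : ℕ × ℕ × ℕ} (ht : t ∈ fourCycleTriples δ) :
    outNbrs δ t ⊆ Icc 1 δ := by
  obtain ⟨a, b, c⟩ := t
  rw [mem_fourCycleTriples] at ht
  intro x
  simp only [outNbrs, mem_filter, mem_insert, mem_singleton, mem_Icc]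
  omega

theorem rltAdj_zero_and_mem_range_iff (hn : n = 2 * δ + 1) (hv : IsBasedCycleAtZero n 4 v)
    (x : ZMod n) : rltAdj n 0 x ∧ x ∈ Set.range v ↔ x.val ∈ outNbrs δ (valTriple v) := by
  have : NeZero n := ⟨by omega⟩
  obtain ⟨h0, hT⟩ := (isBasedCycleAtZero_iff hn).1 hv
  have hδ : (n - 1) / 2 = δ := by omega
  have hv0 : (v 0).val = 0 := by rw [h0, ZMod.val_zero]
  simp only [valTriple, mem_fourCycleTriples] at hT
  simp only [rltAdj_iff_val, hδ, ZMod.val_zero, outNbrs, valTriple, mem_filter, mem_insert,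
    mem_singleton]
  constructor
  · rintro ⟨hx, i, rfl⟩
    fin_cases i <;> simp only [Fin.zero_eta, Fin.mk_one, Fin.reduceFinMk, true_or, or_true,
      true_and] at hx ⊢ <;> omega
  · rintro ⟨h | h, hxδ⟩
    · exact ⟨by omega, 1, ZMod.val_injective n h.symm⟩
    · exact ⟨by omega, 2, ZMod.val_injective n h.symm⟩

theorem exists_rltAdj_zero_mem_range_iff (hn : n = 2 * δ + 1) {w : Fin 4 → ZMod n}
    (hv : IsBasedCycleAtZero n 4 v) (hw : IsBasedCycleAtZero n 4 w) :
    (∃ x, rltAdj n 0 x ∧ x ∈ Set.range v ∧ x ∈ Set.range w) ↔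
      (outNbrs δ (valTriple v) ∩ outNbrs δ (valTriple w)).Nonempty := by
  have : NeZero n := ⟨by omega⟩
  constructor
  · rintro ⟨x, hx, hxv, hxw⟩
    exact ⟨x.val, mem_inter.2 ⟨(rltAdj_zero_and_mem_range_iff hn hv x).1 ⟨hx, hxv⟩,
      (rltAdj_zero_and_mem_range_iff hn hw x).1 ⟨hx, hxw⟩⟩⟩
  · rintro ⟨y, hy⟩
    rw [mem_inter] at hy
    have hyδ := mem_Icc.1 (outNbrs_subset_Icc ((isBasedCycleAtZero_iff hn).1 hv).2 hy.1)
    have hval : (y : ZMod n).val = y := ZMod.val_cast_of_lt (by omega)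
    rw [← hval] at hy
    obtain ⟨hy0, hyv⟩ := (rltAdj_zero_and_mem_range_iff hn hv _).2 hy.1
    exact ⟨y, hy0, hyv, ((rltAdj_zero_and_mem_range_iff hn hw _).2 hy.2).2⟩

theorem natCard_pairs_sharing_outNbr (hn : n = 2 * δ + 1) :
    Nat.card {p : (Fin 4 → ZMod n) × (Fin 4 → ZMod n) //
        IsBasedCycleAtZero n 4 p.1 ∧ IsBasedCycleAtZero n 4 p.2 ∧
        ∃ x : ZMod n, rltAdj n 0 x ∧ x ∈ Set.range p.1 ∧ x ∈ Set.range p.2} =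
      #{q ∈ fourCycleTriples δ ×ˢ fourCycleTriples δ |
        (outNbrs δ q.1 ∩ outNbrs δ q.2).Nonempty} := by
  have : NeZero n := ⟨by omega⟩
  rw [← Set.ncard_coe_finset]
  refine Set.BijOn.ncard_eq (f := Prod.map valTriple valTriple) (Set.InvOn.bijOn
    (f' := Prod.map (ofTriple n) (ofTriple n)) ⟨?_, ?_⟩ ?_ ?_)
  · rintro ⟨v, w⟩ ⟨hv, hw, -⟩
    simp [ofTriple_valTriple hv.1, ofTriple_valTriple hw.1]
  · rintro ⟨s, t⟩ hst
    simp only [coe_filter, mem_product] at hst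
    simp [valTriple_ofTriple hn hst.1.1, valTriple_ofTriple hn hst.1.2]
  · rintro ⟨v, w⟩ ⟨hv, hw, hvw⟩
    exact mem_filter.2 ⟨mem_product.2 ⟨((isBasedCycleAtZero_iff hn).1 hv).2,
      ((isBasedCycleAtZero_iff hn).1 hw).2⟩, (exists_rltAdj_zero_mem_range_iff hn hv hw).1 hvw⟩
  · rintro ⟨s, t⟩ hst
    obtain ⟨hst, hshared⟩ := mem_filter.1 hst
    obtain ⟨hs, ht⟩ := mem_product.1 hst
    have hcycle {u} (hu : u ∈ fourCycleTriples δ) : IsBasedCycleAtZero n 4 (ofTriple n u) :=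
      (isBasedCycleAtZero_iff hn).2 ⟨rfl, (valTriple_ofTriple hn hu).symm ▸ hu⟩
    refine ⟨hcycle hs, hcycle ht,
      (exists_rltAdj_zero_mem_range_iff hn (hcycle hs) (hcycle ht)).2 ?_⟩
    rwa [valTriple_ofTriple hn hs, valTriple_ofTriple hn ht]

def outNbrPair (δ : ℕ) (t : ℕ × ℕ × ℕ) : Finset (ℕ × ℕ) := {p ∈ {(t.1, t.2.1)} | p.2 ≤ δ}

theorem outNbrs_eq_ite (h : (a, b, c) ∈ fourCycleTriples δ) :
    outNbrs δ (a, b, c) = if b ≤ δ then {a, b} else {a} := by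
  rw [mem_fourCycleTriples] at h
  split_ifs with hb <;> simp [outNbrs, filter_insert, filter_singleton, h.2.1, hb]

theorem card_outNbrs_le_two (t : ℕ × ℕ × ℕ) : #(outNbrs δ t) ≤ 2 :=
  (card_filter_le _ _).trans (card_insert_le _ _)

theorem outNbrs_eq_and_card_eq_two_iff {t t' : ℕ × ℕ × ℕ} (ht : t ∈ fourCycleTriples δ)
    (ht' : t' ∈ fourCycleTriples δ) :
    outNbrs δ t = outNbrs δ t' ∧ #(outNbrs δ t) = 2 ↔ t.1 = t'.1 ∧ t.2.1 = t'.2.1 ∧ t.2.1 ≤ δ := by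
  obtain ⟨a, b, c⟩ := t
  obtain ⟨a', b', c'⟩ := t'
  rw [outNbrs_eq_ite ht, outNbrs_eq_ite ht']
  rw [mem_fourCycleTriples] at ht ht'
  dsimp only
  split_ifs with hb hb' hb'
  · rw [← coe_inj, coe_pair, coe_pair, Set.pair_eq_pair_iff, card_pair (by omega)]
    omega
  · refine ⟨fun ⟨h, _⟩ => ?_, by omega⟩
    have := congrArg card h
    rw [card_pair (by omega), card_singleton] at this
    omega
  all_goals simp [hb]

theorem card_outNbrPair_inter (t t' : ℕ × ℕ × ℕ) :
    #(outNbrPair δ t ∩ outNbrPair δ t') =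
      if t.1 = t'.1 ∧ t.2.1 = t'.2.1 ∧ t.2.1 ≤ δ then 1 else 0 := by
  simp only [outNbrPair, filter_singleton]
  split_ifs <;> simp_all [Prod.ext_iff]
  omega

theorem card_outNbrs_inter {t t' : ℕ × ℕ × ℕ} (ht : t ∈ fourCycleTriples δ)
    (ht' : t' ∈ fourCycleTriples δ) :
    #(outNbrs δ t ∩ outNbrs δ t') =
      (if (outNbrs δ t ∩ outNbrs δ t').Nonempty then 1 else 0) +
        #(outNbrPair δ t ∩ outNbrPair δ t') := by
  rw [card_inter_of_card_le_two (card_outNbrs_le_two t) (card_outNbrs_le_two t'),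
    card_outNbrPair_inter, if_congr (outNbrs_eq_and_card_eq_two_iff ht ht') rfl rfl]

theorem outNbrPair_subset {t : ℕ × ℕ × ℕ} (ht : t ∈ fourCycleTriples δ) :
    outNbrPair δ t ⊆ Icc 1 δ ×ˢ Icc 1 δ := by
  obtain ⟨a, b, c⟩ := t
  rw [mem_fourCycleTriples] at ht
  intro p
  simp only [outNbrPair, filter_singleton]
  split_ifs
  · rw [mem_singleton]
    rintro rfl
    simp only [mem_product, mem_Icc]
    omega
  · simp

theorem card_filter_fst_snd_eq (ha : 0 < a) (haδ : a ≤ δ) (hab : a < b) (hb : b ≤ a + δ) :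
    #{t ∈ fourCycleTriples δ | t.1 = a ∧ t.2.1 = b} = min (b + δ) (2 * δ) - max b δ := by
  have : {t ∈ fourCycleTriples δ | t.1 = a ∧ t.2.1 = b} =
      {a} ×ˢ {b} ×ˢ Ioc (max b δ) (min (b + δ) (2 * δ)) := by
    ext ⟨a', b', c'⟩
    simp only [mem_filter, mem_fourCycleTriples, mem_product, mem_singleton, mem_Ioc]
    omega
  simp [this]

theorem card_filter_mem_outNbrPair {x y : ℕ} (hx : x ∈ Icc 1 δ) (hy : y ∈ Icc 1 δ) :
    #{t ∈ fourCycleTriples δ | (x, y) ∈ outNbrPair δ t} = if x < y then y else 0 := by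
  rw [mem_Icc] at hx hy
  have : {t ∈ fourCycleTriples δ | (x, y) ∈ outNbrPair δ t} =
      {t ∈ fourCycleTriples δ | t.1 = x ∧ t.2.1 = y} := by
    refine filter_congr fun t _ => ?_
    simp only [outNbrPair, filter_singleton]
    split_ifs <;> simp [Prod.ext_iff, eq_comm]
    omega
  rw [this]
  split_ifs with hxy
  · rw [card_filter_fst_snd_eq (by omega) hx.2 hxy (by omega)]
    omega
  · rw [card_eq_zero, filter_eq_empty_iff]
    rintro ⟨a, b, c⟩ ht
    simp only [mem_fourCycleTriples] at ht ⊢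
    omega

theorem sum_sq_card_filter_mem_outNbrPair :
    ∑ p ∈ Icc 1 δ ×ˢ Icc 1 δ, #{t ∈ fourCycleTriples δ | p ∈ outNbrPair δ t} ^ 2 =
      ∑ y ∈ Icc 1 δ, (y - 1) * y ^ 2 := by
  rw [sum_product_right]
  refine sum_congr rfl fun y hy => ?_
  rw [sum_congr rfl fun x hx => by
      rw [card_filter_mem_outNbrPair hx hy, ite_pow, zero_pow two_ne_zero],
    ← sum_filter, sum_const, smul_eq_mul]
  rw [mem_Icc] at hy
  rw [show {x ∈ Icc 1 δ | x < y} = Ico 1 y by ext; simp only [mem_filter, mem_Icc, mem_Ico]; omega,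
    Nat.card_Ico]

theorem card_filter_snd_eq {x : ℕ} (hxδ : x ≤ δ) :
    #{t ∈ fourCycleTriples δ | t.2.1 = x} = (x - 1) * x := by
  rw [card_eq_sum_card_fiberwise (f := Prod.fst) (t := Ico 1 x)]
  · rw [← smul_eq_mul, ← Nat.card_Ico 1 x, ← sum_const]
    refine sum_congr rfl fun a ha => ?_
    rw [mem_Ico] at ha
    rw [filter_filter, filter_congr fun _ _ => and_comm,
      card_filter_fst_snd_eq (by omega) (by omega) ha.2 (by omega)]
    omega
  · rintro ⟨a, b, c⟩ ht
    simp only [mem_coe, mem_filter, mem_fourCycleTriples] at ht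
    simp only [mem_coe, mem_Ico]
    omega

theorem two_mul_card_filter_fst_eq {x : ℕ} (hx : 0 < x) (hxδ : x ≤ δ) :
    2 * (#{t ∈ fourCycleTriples δ | t.1 = x} : ℤ) =
      δ ^ 2 + δ + 2 * δ * x - 2 * x ^ 2 - 2 * x := by
  have hfib : #{t ∈ fourCycleTriples δ | t.1 = x} =
      ∑ b ∈ Ioc x (x + δ), (min (b + δ) (2 * δ) - max b δ) := by
    rw [card_eq_sum_card_fiberwise (f := fun t => t.2.1) (t := Ioc x (x + δ))]
    · refine sum_congr rfl fun b hb => ?_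
      rw [mem_Ioc] at hb
      rw [filter_filter, card_filter_fst_snd_eq hx hxδ hb.1 hb.2]
    · rintro ⟨a, b, c⟩ ht
      simp only [mem_coe, mem_filter, mem_fourCycleTriples] at ht
      simp only [mem_coe, mem_Ioc]
      omega
  have hle : δ ≤ x + δ := Nat.le_add_left δ x
  rw [hfib, ← sum_Ioc_consecutive _ hxδ hle, Nat.cast_add, Nat.cast_sum, Nat.cast_sum,
    sum_congr rfl fun b hb =>
      show ((min (b + δ) (2 * δ) - max b δ : ℕ) : ℤ) = b by rw [mem_Ioc] at hb; omega,
    sum_congr rfl fun b hb =>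
      show ((min (b + δ) (2 * δ) - max b δ : ℕ) : ℤ) = 2 * δ - b by rw [mem_Ioc] at hb; omega,
    sum_sub_distrib, sum_const, Nat.card_Ioc, Nat.add_sub_cancel, nsmul_eq_mul]
  linear_combination (norm := (push_cast; ring)) two_mul_sum_Ioc hxδ - two_mul_sum_Ioc hle

theorem two_mul_card_filter_mem_outNbrs {x : ℕ} (hx : x ∈ Icc 1 δ) :
    2 * (#{t ∈ fourCycleTriples δ | x ∈ outNbrs δ t} : ℤ) = δ ^ 2 + δ + (2 * δ - 4) * x := by
  rw [mem_Icc] at hx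
  have hsplit : {t ∈ fourCycleTriples δ | x ∈ outNbrs δ t} =
      {t ∈ fourCycleTriples δ | t.1 = x} ∪ {t ∈ fourCycleTriples δ | t.2.1 = x} := by
    rw [← filter_or]
    exact filter_congr fun t _ => by simp [outNbrs, hx.2, eq_comm]
  have hdisj :
      Disjoint {t ∈ fourCycleTriples δ | t.1 = x} {t ∈ fourCycleTriples δ | t.2.1 = x} := by
    rw [disjoint_filter]
    rintro ⟨a, b, c⟩ ht
    simp only [mem_fourCycleTriples] at ht ⊢
    omega
  rw [hsplit, card_union_of_disjoint hdisj, Nat.cast_add, mul_add,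
    two_mul_card_filter_fst_eq hx.1 hx.2, card_filter_snd_eq hx.2]
  push_cast [Nat.cast_sub hx.1]
  ring

theorem sum_sq_card_filter_mem_outNbrs :
    ∑ x ∈ Icc 1 δ, #{t ∈ fourCycleTriples δ | x ∈ outNbrs δ t} ^ 2 =
      #{p ∈ fourCycleTriples δ ×ˢ fourCycleTriples δ | (outNbrs δ p.1 ∩ outNbrs δ p.2).Nonempty} +
        ∑ y ∈ Icc 1 δ, (y - 1) * y ^ 2 := by
  rw [sum_sq_card_filter_mem fun t ht => outNbrs_subset_Icc ht, ← sum_sq_card_filter_mem_outNbrPair,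
    sum_sq_card_filter_mem fun t ht => outNbrPair_subset ht, card_filter, ← sum_add_distrib]
  exact sum_congr rfl fun p hp => card_outNbrs_inter (mem_product.1 hp).1 (mem_product.1 hp).2

theorem twelve_mul_card_filter_inter_outNbrs_nonempty :
    12 * (#{p ∈ fourCycleTriples δ ×ˢ fourCycleTriples δ |
        (outNbrs δ p.1 ∩ outNbrs δ p.2).Nonempty} : ℤ) =
      ((δ : ℤ) - 1) * δ * (δ + 1) * (13 * δ ^ 2 - 7 * δ - 10) := by
  have hcount : ∑ x ∈ Icc 1 δ, (#{t ∈ fourCycleTriples δ | x ∈ outNbrs δ t} : ℤ) ^ 2 =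
      #{p ∈ fourCycleTriples δ ×ˢ fourCycleTriples δ | (outNbrs δ p.1 ∩ outNbrs δ p.2).Nonempty} +
        ∑ y ∈ Icc 1 δ, ((y : ℤ) - 1) * y ^ 2 := by
    rw [sum_congr rfl fun y (hy : y ∈ Icc 1 δ) =>
      show ((y : ℤ) - 1) * y ^ 2 = ((y - 1) * y ^ 2 : ℕ) by
        push_cast [Nat.cast_sub (mem_Icc.1 hy).1]; ring]
    exact_mod_cast sum_sq_card_filter_mem_outNbrs
  have hdeg : 4 * ∑ x ∈ Icc 1 δ, (#{t ∈ fourCycleTriples δ | x ∈ outNbrs δ t} : ℤ) ^ 2 =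
      ∑ x ∈ Icc 1 δ, (((δ : ℤ) ^ 2 + δ) + (2 * δ - 4) * x) ^ 2 := by
    rw [mul_sum]
    exact sum_congr rfl fun x hx => by rw [← two_mul_card_filter_mem_outNbrs hx]; ring
  refine mul_left_cancel₀ (two_ne_zero (α := ℤ)) ?_
  linear_combination -24 * hcount + 6 * hdeg +
    six_mul_sum_Icc_sq_affine δ ((δ : ℤ) ^ 2 + δ) (2 * δ - 4) -
    2 * twelve_mul_sum_Icc_sub_one_mul_sq δ

end RLT

theorem pairs_four_cycles_sharing_outneighbor_of_RLT_general
    (n : ℕ) (hodd : Odd n) (δ : ℕ) (hδ : δ = (n - 1) / 2) :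
    12 * (Nat.card {p : (Fin 4 → ZMod n) × (Fin 4 → ZMod n) //
        IsBasedCycleAtZero n 4 p.1 ∧ IsBasedCycleAtZero n 4 p.2 ∧
        ∃ x : ZMod n, rltAdj n 0 x ∧ x ∈ Set.range p.1 ∧ x ∈ Set.range p.2} : ℤ)
      = ((δ : ℤ) - 1) * (δ : ℤ) * ((δ : ℤ) + 1) *
          (13 * (δ : ℤ) ^ 2 - 7 * (δ : ℤ) - 10) := by
  obtain ⟨k, rfl⟩ := hodd
  have hn : 2 * k + 1 = 2 * δ + 1 := by omega
  rw [RLT.natCard_pairs_sharing_outNbr hn]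
  exact RLT.twelve_mul_card_filter_inter_outNbrs_nonempty

/-- Pairs of 4-cycles through 0 having a common vertex in the out-set `N⁺(0)` of 0. -/
theorem pairs_four_cycles_sharing_outneighbor_of_RLT
    (n : ℕ) (hodd : Odd n) (hn : 1 ≤ n) (δ : ℕ) (hδ : δ = (n - 1) / 2) :
    12 * (Nat.card {p : (Fin 4 → ZMod n) × (Fin 4 → ZMod n) //
        IsBasedCycleAtZero n 4 p.1 ∧ IsBasedCycleAtZero n 4 p.2 ∧
        ∃ x : ZMod n, rltAdj n 0 x ∧ x ∈ Set.range p.1 ∧ x ∈ Set.range p.2} : ℤ)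
      = ((δ : ℤ) - 1) * (δ : ℤ) * ((δ : ℤ) + 1) *
          (13 * (δ : ℤ) ^ 2 - 7 * (δ : ℤ) - 10) :=
  pairs_four_cycles_sharing_outneighbor_of_RLT_general n hodd δ hδ
end
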